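/- Prenexing a universal quantifier through an arbitrary boolean context: under the same assumptions as for the existential case (p occurs in ψ but not free in φ, p not in the scope of any quantifier in ψ, Y ⊆ vars(ψ)\vars(φ), fresh X⁻, X⁺, σ renaming x to x⁺), ∃Y (ψ[p/∀X φ]) is logically equivalent to ∀X⁻ ∃(Y ∪ X⁺ ∪ {p}) (ψ ∧ (p ↔ φ[σ]) ∧ ⋀_{x∈X} (p → (x⁺ ↔ x⁻))). -/

import Mathlib

/-- Syntax of full quantified boolean formulas. -/
inductive Fml : Type where
  | var : ℕ → Fml
  | tru : Fml
  | fls : Fml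
  | neg : Fml → Fml
  | conj : Fml → Fml → Fml
  | disj : Fml → Fml → Fml
  | imp : Fml → Fml → Fml
  | biff : Fml → Fml → Fml
  | qex : Finset ℕ → Fml → Fml
  | qall : Finset ℕ → Fml → Fml
  deriving DecidableEq

namespace Fml

/-- Satisfaction of a formula by a valuation. -/
def Sat : (ℕ → Bool) → Fml → Prop
  | V, var p => V p = true
  | _, tru => True
  | _, fls => False
  | V, neg φ => ¬ Sat V φ
  | V, conj φ ψ => Sat V φ ∧ Sat V ψ
  | V, disj φ ψ => Sat V φ ∨ Sat V ψ
  | V, imp φ ψ => Sat V φ → Sat V ψ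
  | V, biff φ ψ => (Sat V φ ↔ Sat V ψ)
  | V, qex X φ => ∃ W : ℕ → Bool, (∀ q ∉ X, W q = V q) ∧ Sat W φ
  | V, qall X φ => ∀ W : ℕ → Bool, (∀ q ∉ X, W q = V q) → Sat W φ

/-- Logical equivalence: same truth value under every valuation. -/
def Equiv (φ ψ : Fml) : Prop := ∀ V : ℕ → Bool, Sat V φ ↔ Sat V ψ

/-- All variables occurring (free or bound, including quantifier blocks). -/
def vars : Fml → Finset ℕ
  | var p => {p}
  | tru => ∅
  | fls => ∅
  | neg φ => vars φ
  | conj φ ψ => vars φ ∪ vars ψ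
  | disj φ ψ => vars φ ∪ vars ψ
  | imp φ ψ => vars φ ∪ vars ψ
  | biff φ ψ => vars φ ∪ vars ψ
  | qex X φ => X ∪ vars φ
  | qall X φ => X ∪ vars φ

/-- Free variables. -/
def freeVars : Fml → Finset ℕ
  | var p => {p}
  | tru => ∅
  | fls => ∅
  | neg φ => freeVars φ
  | conj φ ψ => freeVars φ ∪ freeVars ψ
  | disj φ ψ => freeVars φ ∪ freeVars ψ
  | imp φ ψ => freeVars φ ∪ freeVars ψ
  | biff φ ψ => freeVars φ ∪ freeVars ψ
  | qex X φ => freeVars φ \ X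
  | qall X φ => freeVars φ \ X

/-- Bound variables. -/
def boundVars : Fml → Finset ℕ
  | var _ => ∅
  | tru => ∅
  | fls => ∅
  | neg φ => boundVars φ
  | conj φ ψ => boundVars φ ∪ boundVars ψ
  | disj φ ψ => boundVars φ ∪ boundVars ψ
  | imp φ ψ => boundVars φ ∪ boundVars ψ
  | biff φ ψ => boundVars φ ∪ boundVars ψ
  | qex X φ => X ∪ boundVars φ
  | qall X φ => X ∪ boundVars φ

/-- Substitution of `ρ` for free occurrences of the variable `p`. -/
def subst (p : ℕ) (ρ : Fml) : Fml → Fml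
  | var q => if q = p then ρ else var q
  | tru => tru
  | fls => fls
  | neg φ => neg (subst p ρ φ)
  | conj φ ψ => conj (subst p ρ φ) (subst p ρ ψ)
  | disj φ ψ => disj (subst p ρ φ) (subst p ρ ψ)
  | imp φ ψ => imp (subst p ρ φ) (subst p ρ ψ)
  | biff φ ψ => biff (subst p ρ φ) (subst p ρ ψ)
  | qex X φ => qex X (if p ∈ X then φ else subst p ρ φ)
  | qall X φ => qall X (if p ∈ X then φ else subst p ρ φ)

/-- Simultaneous substitution given by an association list. -/
def simSubst (σ : List (ℕ × Fml)) : Fml → Fml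
  | var q => ((σ.find? (fun e => e.1 == q)).map Prod.snd).getD (var q)
  | tru => tru
  | fls => fls
  | neg φ => neg (simSubst σ φ)
  | conj φ ψ => conj (simSubst σ φ) (simSubst σ ψ)
  | disj φ ψ => disj (simSubst σ φ) (simSubst σ ψ)
  | imp φ ψ => imp (simSubst σ φ) (simSubst σ ψ)
  | biff φ ψ => biff (simSubst σ φ) (simSubst σ ψ)
  | qex X φ => qex X (simSubst (σ.filter (fun e => decide (e.1 ∉ X))) φ)
  | qall X φ => qall X (simSubst (σ.filter (fun e => decide (e.1 ∉ X))) φ)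

/-- Conjunction of a list of formulas (`⊤` for the empty list). -/
def bigAnd : List Fml → Fml
  | [] => tru
  | [φ] => φ
  | φ :: rest => conj φ (bigAnd rest)

/-- Length of a formula: variables and operators count 1, except that
negation does not count; a block `QX` contributes `1 + |X|`. -/
def len : Fml → ℕ
  | var _ => 1
  | tru => 1
  | fls => 1
  | neg φ => len φ
  | conj φ ψ => 1 + len φ + len ψ
  | disj φ ψ => 1 + len φ + len ψ
  | imp φ ψ => 1 + len φ + len ψ
  | biff φ ψ => 1 + len φ + len ψ
  | qex X φ => 1 + X.card + len φ
  | qall X φ => 1 + X.card + len φ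

/-- Quantifier depth. -/
def md : Fml → ℕ
  | var _ => 0
  | tru => 0
  | fls => 0
  | neg φ => md φ
  | conj φ ψ => max (md φ) (md ψ)
  | disj φ ψ => max (md φ) (md ψ)
  | imp φ ψ => max (md φ) (md ψ)
  | biff φ ψ => max (md φ) (md ψ)
  | qex _ φ => 1 + md φ
  | qall _ φ => 1 + md φ

/-- Number of quantifier blocks. -/
def nb : Fml → ℕ
  | var _ => 0
  | tru => 0
  | fls => 0
  | neg φ => nb φ
  | conj φ ψ => nb φ + nb ψ
  | disj φ ψ => nb φ + nb ψ
  | imp φ ψ => nb φ + nb ψ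
  | biff φ ψ => nb φ + nb ψ
  | qex _ φ => 1 + nb φ
  | qall _ φ => 1 + nb φ

/-- Total number of quantified variables (sum of block sizes). -/
def nv : Fml → ℕ
  | var _ => 0
  | tru => 0
  | fls => 0
  | neg φ => nv φ
  | conj φ ψ => nv φ + nv ψ
  | disj φ ψ => nv φ + nv ψ
  | imp φ ψ => nv φ + nv ψ
  | biff φ ψ => nv φ + nv ψ
  | qex X φ => X.card + nv φ
  | qall X φ => X.card + nv φ

/-- Boolean (quantifier-free) formulas. -/
def isBool : Fml → Bool
  | var _ => true
  | tru => true
  | fls => true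
  | neg φ => isBool φ
  | conj φ ψ => isBool φ && isBool ψ
  | disj φ ψ => isBool φ && isBool ψ
  | imp φ ψ => isBool φ && isBool ψ
  | biff φ ψ => isBool φ && isBool ψ
  | qex _ _ => false
  | qall _ _ => false

/-- Prenex form: a prefix of quantifier blocks followed by a boolean formula. -/
def IsPrenex : Fml → Prop
  | qex _ φ => IsPrenex φ
  | qall _ φ => IsPrenex φ
  | φ => isBool φ = true

end Fml

/-- Quantifiers. -/
inductive Quant : Type where
  | qex : Quant
  | qall : Quant
  deriving DecidableEq

/-- The dual of a quantifier. -/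
def Quant.dual : Quant → Quant
  | .qex => .qall
  | .qall => .qex

/-- Applying a quantifier block to a formula. -/
def qApply : Quant → Finset ℕ → Fml → Fml
  | .qex, X, φ => Fml.qex X φ
  | .qall, X, φ => Fml.qall X φ

namespace Fml
/-- `p` is not in the scope of any quantifier of the formula
(no occurrence of `p` lies under a quantifier). -/
def OutsideQuantifiers (p : ℕ) : Fml → Prop
  | var _ => True
  | tru => True
  | fls => True
  | neg φ => OutsideQuantifiers p φ
  | conj φ ψ => OutsideQuantifiers p φ ∧ OutsideQuantifiers p ψ
  | disj φ ψ => OutsideQuantifiers p φ ∧ OutsideQuantifiers p ψ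
  | imp φ ψ => OutsideQuantifiers p φ ∧ OutsideQuantifiers p ψ
  | biff φ ψ => OutsideQuantifiers p φ ∧ OutsideQuantifiers p ψ
  | qex X φ => p ∉ X ∧ p ∉ vars φ
  | qall X φ => p ∉ X ∧ p ∉ vars φ
end Fml
namespace Fml

lemma freeVars_subset_vars : ∀ φ : Fml, φ.freeVars ⊆ φ.vars := by
  intro φ
  induction φ with
  | var q => simp [freeVars, vars]
  | tru => simp [freeVars, vars]
  | fls => simp [freeVars, vars]
  | neg φ ih => simpa [freeVars, vars] using ih
  | conj φ ψ ih1 ih2 => exact Finset.union_subset_union ih1 ih2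
  | disj φ ψ ih1 ih2 => exact Finset.union_subset_union ih1 ih2
  | imp φ ψ ih1 ih2 => exact Finset.union_subset_union ih1 ih2
  | biff φ ψ ih1 ih2 => exact Finset.union_subset_union ih1 ih2
  | qex Z φ ih =>
      exact (Finset.sdiff_subset).trans (ih.trans Finset.subset_union_right)
  | qall Z φ ih =>
      exact (Finset.sdiff_subset).trans (ih.trans Finset.subset_union_right)

lemma sat_congr : ∀ (φ : Fml) (V W : ℕ → Bool),
    (∀ q ∈ φ.freeVars, V q = W q) → (Sat V φ ↔ Sat W φ) := by
  intro φ
  induction φ with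
  | var q => intro V W h; simp only [Sat, h q (by simp [freeVars])]
  | tru => intro V W h; simp [Sat]
  | fls => intro V W h; simp [Sat]
  | neg φ ih => intro V W h; simp only [Sat]; rw [ih V W h]
  | conj φ ψ ih1 ih2 =>
      intro V W h; simp only [Sat]
      rw [ih1 V W (fun q hq => h q (by simp [freeVars, hq])),
        ih2 V W (fun q hq => h q (by simp [freeVars, hq]))]
  | disj φ ψ ih1 ih2 =>
      intro V W h; simp only [Sat]
      rw [ih1 V W (fun q hq => h q (by simp [freeVars, hq])),
        ih2 V W (fun q hq => h q (by simp [freeVars, hq]))]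
  | imp φ ψ ih1 ih2 =>
      intro V W h; simp only [Sat]
      rw [ih1 V W (fun q hq => h q (by simp [freeVars, hq])),
        ih2 V W (fun q hq => h q (by simp [freeVars, hq]))]
  | biff φ ψ ih1 ih2 =>
      intro V W h; simp only [Sat]
      rw [ih1 V W (fun q hq => h q (by simp [freeVars, hq])),
        ih2 V W (fun q hq => h q (by simp [freeVars, hq]))]
  | qex Z φ ih =>
      intro V W h; simp only [Sat]
      constructor
      · rintro ⟨U, hU, hs⟩
        refine ⟨fun q => if q ∈ Z then U q else W q, fun q hq => by simp [hq], ?_⟩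
        rw [← ih U _ ?_]
        · exact hs
        · intro q hq
          by_cases hz : q ∈ Z
          · simp [hz]
          · rw [if_neg hz, hU q hz]
            exact h q (by simp [freeVars, hq, hz])
      · rintro ⟨U, hU, hs⟩
        refine ⟨fun q => if q ∈ Z then U q else V q, fun q hq => by simp [hq], ?_⟩
        rw [ih _ U ?_]
        · exact hs
        · intro q hq
          by_cases hz : q ∈ Z
          · simp [hz]
          · rw [if_neg hz, hU q hz]
            exact h q (by simp [freeVars, hq, hz])
  | qall Z φ ih =>
      intro V W h; simp only [Sat]
      constructor
      · intro hall U hU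
        have hs := hall (fun q => if q ∈ Z then U q else V q) (fun q hq => by simp [hq])
        rw [ih _ U ?_] at hs
        · exact hs
        · intro q hq
          by_cases hz : q ∈ Z
          · simp [hz]
          · rw [if_neg hz, hU q hz]
            exact h q (by simp [freeVars, hq, hz])
      · intro hall U hU
        have hs := hall (fun q => if q ∈ Z then U q else W q) (fun q hq => by simp [hq])
        rw [ih _ U ?_] at hs
        · exact hs
        · intro q hq
          by_cases hz : q ∈ Z
          · simp [hz]
          · rw [if_neg hz, hU q hz]
            exact (h q (by simp [freeVars, hq, hz])).symm

lemma subst_of_not_mem_vars (p : ℕ) (ρ : Fml) :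
    ∀ φ : Fml, p ∉ φ.vars → subst p ρ φ = φ := by
  intro φ
  induction φ with
  | var q =>
      intro h; simp only [vars, Finset.mem_singleton] at h
      simp only [subst]
      rw [if_neg (fun hh => h hh.symm)]
  | tru => intro h; rfl
  | fls => intro h; rfl
  | neg φ ih => intro h; simp only [vars] at h; simp [subst, ih h]
  | conj φ ψ ih1 ih2 =>
      intro h; simp only [vars, Finset.mem_union, not_or] at h
      simp [subst, ih1 h.1, ih2 h.2]
  | disj φ ψ ih1 ih2 =>
      intro h; simp only [vars, Finset.mem_union, not_or] at h
      simp [subst, ih1 h.1, ih2 h.2]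
  | imp φ ψ ih1 ih2 =>
      intro h; simp only [vars, Finset.mem_union, not_or] at h
      simp [subst, ih1 h.1, ih2 h.2]
  | biff φ ψ ih1 ih2 =>
      intro h; simp only [vars, Finset.mem_union, not_or] at h
      simp [subst, ih1 h.1, ih2 h.2]
  | qex Z φ ih =>
      intro h; simp only [vars, Finset.mem_union, not_or] at h
      simp [subst, h.1, ih h.2]
  | qall Z φ ih =>
      intro h; simp only [vars, Finset.mem_union, not_or] at h
      simp [subst, h.1, ih h.2]

lemma sat_subst (p : ℕ) (ρ : Fml) (b : Bool) :
    ∀ (φ : Fml) (V : ℕ → Bool), OutsideQuantifiers p φ → (Sat V ρ ↔ b = true) →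
    (Sat V (subst p ρ φ) ↔ Sat (Function.update V p b) φ) := by
  intro φ
  induction φ with
  | var q =>
      intro V _ hb
      by_cases hq : q = p
      · subst hq; simpa [subst, Sat, Function.update_self] using hb
      · simp [subst, hq, Sat, Function.update_of_ne hq]
  | tru => intro V _ _; simp [subst, Sat]
  | fls => intro V _ _; simp [subst, Sat]
  | neg φ ih => intro V h hb; simp only [subst, Sat]; rw [ih V h hb]
  | conj φ ψ ih1 ih2 =>
      intro V h hb; simp only [subst, Sat]; rw [ih1 V h.1 hb, ih2 V h.2 hb]
  | disj φ ψ ih1 ih2 =>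
      intro V h hb; simp only [subst, Sat]; rw [ih1 V h.1 hb, ih2 V h.2 hb]
  | imp φ ψ ih1 ih2 =>
      intro V h hb; simp only [subst, Sat]; rw [ih1 V h.1 hb, ih2 V h.2 hb]
  | biff φ ψ ih1 ih2 =>
      intro V h hb; simp only [subst, Sat]; rw [ih1 V h.1 hb, ih2 V h.2 hb]
  | qex Z φ ih =>
      intro V h hb
      have heq : subst p ρ (qex Z φ) = qex Z φ := by
        simp only [subst]
        split
        · rfl
        · rw [subst_of_not_mem_vars p ρ φ h.2]
      rw [heq]
      refine sat_congr _ V _ (fun q hq => ?_)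
      have hqp : q ≠ p := by
        rintro rfl
        exact h.2 (freeVars_subset_vars φ (by
          simp only [freeVars, Finset.mem_sdiff] at hq; exact hq.1))
      rw [Function.update_of_ne hqp]
  | qall Z φ ih =>
      intro V h hb
      have heq : subst p ρ (qall Z φ) = qall Z φ := by
        simp only [subst]
        split
        · rfl
        · rw [subst_of_not_mem_vars p ρ φ h.2]
      rw [heq]
      refine sat_congr _ V _ (fun q hq => ?_)
      have hqp : q ≠ p := by
        rintro rfl
        exact h.2 (freeVars_subset_vars φ (by
          simp only [freeVars, Finset.mem_sdiff] at hq; exact hq.1))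
      rw [Function.update_of_ne hqp]

lemma find?_map_eq (f : ℕ → ℕ) (q : ℕ) : ∀ l : List ℕ,
    (l.map (fun x => (x, var (f x)))).find? (fun e => e.1 == q) =
      if q ∈ l then some (q, var (f q)) else none := by
  intro l
  induction l with
  | nil => simp
  | cons x l ih =>
      by_cases hx : x = q
      · subst hx; simp
      · simp only [List.map_cons, List.mem_cons]
        rw [List.find?_cons_of_neg (by simp [hx]), ih]
        by_cases hql : q ∈ l
        · simp [hql]
        · simp [hql, Ne.symm hx]

lemma sat_simSubst (f : ℕ → ℕ) :
    ∀ (φ : Fml) (l : List ℕ) (V : ℕ → Bool), (∀ x ∈ l, f x ∉ φ.vars) →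
    (Sat V (simSubst (l.map (fun x => (x, var (f x)))) φ) ↔
      Sat (fun q => if q ∈ l then V (f q) else V q) φ) := by
  intro φ
  induction φ with
  | var q =>
      intro l V hf
      simp only [simSubst, find?_map_eq]
      by_cases hq : q ∈ l <;> simp [hq, Sat]
  | tru => intro l V hf; simp [simSubst, Sat]
  | fls => intro l V hf; simp [simSubst, Sat]
  | neg φ ih => intro l V hf; simp only [simSubst, Sat]; rw [ih l V hf]
  | conj φ ψ ih1 ih2 =>
      intro l V hf; simp only [simSubst, Sat]
      rw [ih1 l V (fun x hx => fun hm => hf x hx (by simp [vars, hm])),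
        ih2 l V (fun x hx => fun hm => hf x hx (by simp [vars, hm]))]
  | disj φ ψ ih1 ih2 =>
      intro l V hf; simp only [simSubst, Sat]
      rw [ih1 l V (fun x hx => fun hm => hf x hx (by simp [vars, hm])),
        ih2 l V (fun x hx => fun hm => hf x hx (by simp [vars, hm]))]
  | imp φ ψ ih1 ih2 =>
      intro l V hf; simp only [simSubst, Sat]
      rw [ih1 l V (fun x hx => fun hm => hf x hx (by simp [vars, hm])),
        ih2 l V (fun x hx => fun hm => hf x hx (by simp [vars, hm]))]
  | biff φ ψ ih1 ih2 =>
      intro l V hf; simp only [simSubst, Sat]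
      rw [ih1 l V (fun x hx => fun hm => hf x hx (by simp [vars, hm])),
        ih2 l V (fun x hx => fun hm => hf x hx (by simp [vars, hm]))]
  | qex Z φ ih =>
      intro l V hf
      have hZ : ∀ x ∈ l, f x ∉ Z := fun x hx hm => hf x hx (by simp [vars, hm])
      have hφ : ∀ x ∈ l, f x ∉ φ.vars := fun x hx hm => hf x hx (by simp [vars, hm])
      simp only [simSubst, Sat]
      have hfilter : List.filter (fun e => decide (e.1 ∉ Z))
            (l.map (fun x => (x, var (f x))))
          = (l.filter (fun x => decide (x ∉ Z))).map (fun x => (x, var (f x))) := by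
        rw [List.filter_map]
        rfl
      rw [hfilter]
      set l' := l.filter (fun x => decide (x ∉ Z)) with hl'
      have hl'mem : ∀ q, q ∈ l' ↔ q ∈ l ∧ q ∉ Z := by
        intro q; simp [hl', List.mem_filter]
      constructor
      · rintro ⟨W, hW, hs⟩
        rw [ih l' W (fun x hx => hφ x ((hl'mem x).1 hx).1)] at hs
        refine ⟨fun q => if q ∈ l' then W (f q) else W q, ?_, hs⟩
        intro q hq
        by_cases hql : q ∈ l
        · have : q ∈ l' := (hl'mem q).2 ⟨hql, hq⟩
          simp only [this, if_pos, hql]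
          exact hW (f q) (hZ q hql)
        · have : q ∉ l' := fun hh => hql ((hl'mem q).1 hh).1
          simp only [this, if_neg, hql, if_neg hql]
          exact hW q hq
      · rintro ⟨W', hW', hs⟩
        refine ⟨fun q => if q ∈ Z then W' q else V q, fun q hq => by simp [hq], ?_⟩
        rw [ih l' _ (fun x hx => hφ x ((hl'mem x).1 hx).1)]
        rw [sat_congr φ _ W' ?_]
        · exact hs
        · intro q hq
          by_cases hql' : q ∈ l'
          · obtain ⟨hql, hqZ⟩ := (hl'mem q).1 hql'
            simp only [if_pos hql']
            rw [if_neg (hZ q hql), hW' q hqZ, if_pos hql]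
          · simp only [if_neg hql']
            by_cases hqZ : q ∈ Z
            · simp [hqZ]
            · have hql : q ∉ l := fun hh => hql' ((hl'mem q).2 ⟨hh, hqZ⟩)
              rw [if_neg hqZ, hW' q hqZ, if_neg hql]
  | qall Z φ ih =>
      intro l V hf
      have hZ : ∀ x ∈ l, f x ∉ Z := fun x hx hm => hf x hx (by simp [vars, hm])
      have hφ : ∀ x ∈ l, f x ∉ φ.vars := fun x hx hm => hf x hx (by simp [vars, hm])
      simp only [simSubst, Sat]
      have hfilter : List.filter (fun e => decide (e.1 ∉ Z))
            (l.map (fun x => (x, var (f x))))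
          = (l.filter (fun x => decide (x ∉ Z))).map (fun x => (x, var (f x))) := by
        rw [List.filter_map]
        rfl
      rw [hfilter]
      set l' := l.filter (fun x => decide (x ∉ Z)) with hl'
      have hl'mem : ∀ q, q ∈ l' ↔ q ∈ l ∧ q ∉ Z := by
        intro q; simp [hl', List.mem_filter]
      constructor
      · intro hall W' hW'
        have hs := hall (fun q => if q ∈ Z then W' q else V q) (fun q hq => by simp [hq])
        rw [ih l' _ (fun x hx => hφ x ((hl'mem x).1 hx).1)] at hs
        rw [sat_congr φ _ W' ?_] at hs
        · exact hs
        · intro q hq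
          by_cases hql' : q ∈ l'
          · obtain ⟨hql, hqZ⟩ := (hl'mem q).1 hql'
            simp only [if_pos hql']
            rw [if_neg (hZ q hql), hW' q hqZ, if_pos hql]
          · simp only [if_neg hql']
            by_cases hqZ : q ∈ Z
            · simp [hqZ]
            · have hql : q ∉ l := fun hh => hql' ((hl'mem q).2 ⟨hh, hqZ⟩)
              rw [if_neg hqZ, hW' q hqZ, if_neg hql]
      · intro hall W hW
        have hs := hall (fun q => if q ∈ l' then W (f q) else W q) ?_
        · rw [ih l' W (fun x hx => hφ x ((hl'mem x).1 hx).1)]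
          exact hs
        · intro q hq
          by_cases hql : q ∈ l
          · have : q ∈ l' := (hl'mem q).2 ⟨hql, hq⟩
            simp only [this, if_pos, hql]
            exact hW (f q) (hZ q hql)
          · have : q ∉ l' := fun hh => hql ((hl'mem q).1 hh).1
            simp only [this, if_neg, hql, if_neg hql]
            exact hW q hq

lemma bigAnd_cons (χ χ' : Fml) (L : List Fml) :
    bigAnd (χ :: χ' :: L) = conj χ (bigAnd (χ' :: L)) := rfl

lemma sat_bigAnd (V : ℕ → Bool) : ∀ L : List Fml, Sat V (bigAnd L) ↔ ∀ χ ∈ L, Sat V χ := by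
  intro L
  induction L with
  | nil => simp [bigAnd, Sat]
  | cons χ L ih =>
      cases L with
      | nil => simp [bigAnd]
      | cons χ' L' =>
          rw [bigAnd_cons]
          simp only [Sat, ih, List.mem_cons]
          constructor
          · rintro ⟨h1, h2⟩ χ'' hh
            rcases hh with rfl | hh
            · exact h1
            · exact h2 _ hh
          · intro h
            exact ⟨h χ (Or.inl rfl), fun χ'' hh => h χ'' (Or.inr hh)⟩

end Fml

namespace Fml

lemma sat_qex (V : ℕ → Bool) (Z : Finset ℕ) (θ : Fml) :
    Sat V (qex Z θ) ↔ ∃ W : ℕ → Bool, (∀ q ∉ Z, W q = V q) ∧ Sat W θ := Iff.rfl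

lemma sat_qall (V : ℕ → Bool) (Z : Finset ℕ) (θ : Fml) :
    Sat V (qall Z θ) ↔ ∀ W : ℕ → Bool, (∀ q ∉ Z, W q = V q) → Sat W θ := Iff.rfl

lemma bool_eq_of_iff {a b : Bool} (h : (a = true) ↔ (b = true)) : a = b := by
  cases a <;> cases b <;> simp_all

end Fml


open Fml in
/-- prenexing a universal quantifier through an arbitrary
boolean context (Lemma 1, universal case): under the stated freshness and
occurrence conditions,
`∃Y (ψ[p/∀X φ]) ≡
 ∀X⁻ ∃(Y ∪ X⁺ ∪ {p}) (ψ ∧ (p ↔ φ[σ]) ∧ ⋀_{x∈X}(p → (x⁺ ↔ x⁻)))`. -/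
theorem prenex_forall (ψ φ : Fml) (p : ℕ) (Y X : Finset ℕ) (mp mn : ℕ → ℕ)
    (hpocc : p ∈ ψ.vars) (hpφ : p ∉ φ.freeVars) (hpscope : OutsideQuantifiers p ψ)
    (hY : Y ⊆ ψ.vars \ φ.vars)
    (hfresh : ∀ x ∈ X,
      mp x ∉ ψ.vars ∪ φ.vars ∪ Y ∪ X ∪ {p} ∧ mn x ∉ ψ.vars ∪ φ.vars ∪ Y ∪ X ∪ {p})
    (hdist : ∀ x ∈ X, ∀ x' ∈ X, ∀ b b' : Bool,
      (if b then mp x else mn x) = (if b' then mp x' else mn x') → (x, b) = (x', b')) :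
    Equiv (qex Y (subst p (qall X φ) ψ))
      (qall (X.image mn) (qex (Y ∪ X.image mp ∪ {p})
        (conj ψ (conj
          (biff (var p) (simSubst (X.toList.map (fun x => (x, var (mp x)))) φ))
          (bigAnd (X.toList.map
            (fun x => imp (var p) (biff (var (mp x)) (var (mn x)))))))))) := by
  classical
  intro V
  have hmp : ∀ x ∈ X, mp x ∉ ψ.vars ∧ mp x ∉ φ.vars ∧ mp x ∉ Y ∧ mp x ∉ X ∧ mp x ≠ p := by
    intro x hx
    have h := (hfresh x hx).1
    simp only [Finset.mem_union, Finset.mem_singleton, not_or] at h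
    tauto
  have hmn : ∀ x ∈ X, mn x ∉ ψ.vars ∧ mn x ∉ φ.vars ∧ mn x ∉ Y ∧ mn x ∉ X ∧ mn x ≠ p := by
    intro x hx
    have h := (hfresh x hx).2
    simp only [Finset.mem_union, Finset.mem_singleton, not_or] at h
    tauto
  have hmpinj : ∀ x ∈ X, ∀ x' ∈ X, mp x = mp x' → x = x' := by
    intro x hx x' hx' h
    have := hdist x hx x' hx' true true (by simpa using h)
    simpa using this
  have hmninj : ∀ x ∈ X, ∀ x' ∈ X, mn x = mn x' → x = x' := by
    intro x hx x' hx' h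
    have := hdist x hx x' hx' false false (by simpa using h)
    simpa using this
  have hmpmn : ∀ x ∈ X, ∀ x' ∈ X, mp x ≠ mn x' := by
    intro x hx x' hx' h
    have := hdist x hx x' hx' true false (by simpa using h)
    simp at this
  have hYφ : ∀ q ∈ Y, q ∉ φ.vars := fun q hq => (Finset.mem_sdiff.1 (hY hq)).2
  have hvarsmp : ∀ q, q ∈ X.image mp → (q ∉ ψ.vars ∧ q ∉ φ.vars ∧ q ∉ Y ∧ q ≠ p) := by
    intro q hq
    obtain ⟨x, hx, rfl⟩ := Finset.mem_image.1 hq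
    exact ⟨(hmp x hx).1, (hmp x hx).2.1, (hmp x hx).2.2.1, (hmp x hx).2.2.2.2⟩
  have hvarsmn : ∀ q, q ∈ X.image mn → (q ∉ ψ.vars ∧ q ∉ φ.vars ∧ q ∉ Y ∧ q ≠ p) := by
    intro q hq
    obtain ⟨x, hx, rfl⟩ := Finset.mem_image.1 hq
    exact ⟨(hmn x hx).1, (hmn x hx).2.1, (hmn x hx).2.2.1, (hmn x hx).2.2.2.2⟩
  have hmnimg : ∀ x ∈ X, mn x ∉ X.image mp := by
    intro x hx h
    obtain ⟨x', hx', hh⟩ := Finset.mem_image.1 h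
    exact hmpmn x' hx' x hx hh
  set pk : ℕ → ℕ := fun q => if h : ∃ y ∈ X, mp y = q then h.choose else q with hpkdef
  have hpk : ∀ x ∈ X, pk (mp x) = x := by
    intro x hx
    have hex : ∃ y ∈ X, mp y = mp x := ⟨x, hx, rfl⟩
    simp only [hpkdef]
    rw [dif_pos hex]
    exact hmpinj _ hex.choose_spec.1 x hx hex.choose_spec.2
  set pkn : ℕ → ℕ := fun q => if h : ∃ y ∈ X, mn y = q then h.choose else q with hpkndef
  have hpkn : ∀ x ∈ X, pkn (mn x) = x := by
    intro x hx
    have hex : ∃ y ∈ X, mn y = mn x := ⟨x, hx, rfl⟩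
    simp only [hpkndef]
    rw [dif_pos hex]
    exact hmninj _ hex.choose_spec.1 x hx hex.choose_spec.2
  have hχfree : ∀ W : ℕ → Bool, (∀ q ∉ Y, W q = V q) →
      (Sat W (qall X φ) ↔ Sat V (qall X φ)) := by
    intro W hW
    refine sat_congr _ W V (fun q hq => ?_)
    simp only [freeVars, Finset.mem_sdiff] at hq
    exact hW q (fun hqY => hYφ q hqY (freeVars_subset_vars φ hq.1))
  have hpfree : ∀ q ∈ φ.freeVars, q ≠ p := fun q hq h => hpφ (h ▸ hq)
  have hsim : ∀ M : ℕ → Bool,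
      Sat M (simSubst (X.toList.map fun x => (x, var (mp x))) φ) ↔
      Sat (fun q => if q ∈ X.toList then M (mp q) else M q) φ :=
    fun M => sat_simSubst mp φ X.toList M (fun x hx => (hmp x (Finset.mem_toList.1 hx)).2.1)
  have hbody : ∀ M : ℕ → Bool,
      Sat M (conj ψ (conj
          (biff (var p) (simSubst (X.toList.map fun x => (x, var (mp x))) φ))
          (bigAnd (X.toList.map fun x =>
            imp (var p) (biff (var (mp x)) (var (mn x))))))) ↔
      (Sat M ψ ∧
        ((M p = true ↔ Sat (fun q => if q ∈ X.toList then M (mp q) else M q) φ) ∧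
        ∀ x ∈ X, M p = true → (M (mp x) = true ↔ M (mn x) = true))) := by
    intro M
    simp only [Sat, hsim M, sat_bigAnd]
    refine and_congr Iff.rfl (and_congr Iff.rfl ?_)
    constructor
    · intro h x hx hp
      have hh := h _ (List.mem_map.2 ⟨x, Finset.mem_toList.2 hx, rfl⟩)
      simpa [Sat] using hh hp
    · intro h χ hχ
      obtain ⟨x, hx, rfl⟩ := List.mem_map.1 hχ
      simp only [Sat]
      exact h x (Finset.mem_toList.1 hx)
  have hmemB : ∀ q, (q ∉ Y ∪ X.image mp ∪ {p}) ↔ (q ∉ Y ∧ q ∉ X.image mp ∧ q ≠ p) := by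
    intro q
    simp only [Finset.mem_union, Finset.mem_singleton, not_or]
    tauto
  simp only [sat_qex, sat_qall]
  constructor
  · rintro ⟨W, hW, hsat⟩
    rw [sat_subst p (qall X φ) (decide (Sat V (qall X φ))) ψ W hpscope
      ((hχfree W hW).trans (by simp))] at hsat
    intro N hN
    by_cases ha : Sat V (qall X φ)
    · have hb : decide (Sat V (qall X φ)) = true := decide_eq_true ha
      rw [hb] at hsat
      set M : ℕ → Bool := fun q => if q = p then true else if q ∈ X.image mp then
        N (mn (pk q)) else if q ∈ Y then W q else N q with hMdef
      have hMp : M p = true := by simp [hMdef]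
      have hMmp : ∀ x ∈ X, M (mp x) = N (mn x) := by
        intro x hx
        simp only [hMdef]
        rw [if_neg (hmp x hx).2.2.2.2, if_pos (Finset.mem_image_of_mem mp hx), hpk x hx]
      have hMmn : ∀ x ∈ X, M (mn x) = N (mn x) := by
        intro x hx
        simp only [hMdef]
        rw [if_neg (hmn x hx).2.2.2.2, if_neg (hmnimg x hx), if_neg (hmn x hx).2.2.1]
      have hMother : ∀ q, q ≠ p → q ∉ X.image mp → q ∉ Y → M q = N q := by
        intro q h1 h2 h3
        simp only [hMdef]
        rw [if_neg h1, if_neg h2, if_neg h3]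
      have hMY : ∀ q ∈ Y, q ≠ p → M q = W q := by
        intro q hq h1
        simp only [hMdef]
        rw [if_neg h1, if_neg (fun h => (hvarsmp q h).2.2.1 hq), if_pos hq]
      refine ⟨M, ?_, ?_⟩
      · intro q hq
        rw [hmemB] at hq
        exact hMother q hq.2.2 hq.2.1 hq.1
      · rw [hbody M]
        refine ⟨?_, ?_, ?_⟩
        · refine (sat_congr ψ (Function.update W p true) M ?_).1 hsat
          intro q hq
          by_cases hqp : q = p
          · subst hqp
            rw [Function.update_self, hMp]
          · rw [Function.update_of_ne hqp]
            have hqψ := freeVars_subset_vars ψ hq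
            by_cases hqY : q ∈ Y
            · rw [hMY q hqY hqp]
            · rw [hMother q hqp (fun h => (hvarsmp q h).1 hqψ) hqY,
                hN q (fun h => (hvarsmn q h).1 hqψ), hW q hqY]
        · refine iff_of_true hMp ?_
          have hU0 := ha (fun q => if q ∈ X then M (mp q) else V q) (fun q hq => by simp [hq])
          refine (sat_congr φ _ _ ?_).1 hU0
          intro q hq
          by_cases hqX : q ∈ X
          · simp [hqX, Finset.mem_toList]
          · have hqv := freeVars_subset_vars φ hq
            rw [if_neg hqX, if_neg (by simpa [Finset.mem_toList] using hqX),
              hMother q (hpfree q hq) (fun h => (hvarsmp q h).2.1 hqv) (fun h => hYφ q h hqv),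
              hN q (fun h => (hvarsmn q h).2.1 hqv)]
        · intro x hx _
          rw [hMmp x hx, hMmn x hx]
    · have hb : decide (Sat V (qall X φ)) = false := decide_eq_false ha
      rw [hb] at hsat
      rw [sat_qall] at ha
      push_neg at ha
      obtain ⟨U, hU, hUφ⟩ := ha
      set M : ℕ → Bool := fun q => if q = p then false else if q ∈ X.image mp then
        U (pk q) else if q ∈ Y then W q else N q with hMdef
      have hMp : M p = false := by simp [hMdef]
      have hMmp : ∀ x ∈ X, M (mp x) = U x := by
        intro x hx
        simp only [hMdef]
        rw [if_neg (hmp x hx).2.2.2.2, if_pos (Finset.mem_image_of_mem mp hx), hpk x hx]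
      have hMother : ∀ q, q ≠ p → q ∉ X.image mp → q ∉ Y → M q = N q := by
        intro q h1 h2 h3
        simp only [hMdef]
        rw [if_neg h1, if_neg h2, if_neg h3]
      have hMY : ∀ q ∈ Y, q ≠ p → M q = W q := by
        intro q hq h1
        simp only [hMdef]
        rw [if_neg h1, if_neg (fun h => (hvarsmp q h).2.2.1 hq), if_pos hq]
      refine ⟨M, ?_, ?_⟩
      · intro q hq
        rw [hmemB] at hq
        exact hMother q hq.2.2 hq.2.1 hq.1
      · rw [hbody M]
        refine ⟨?_, ?_, ?_⟩
        · refine (sat_congr ψ (Function.update W p false) M ?_).1 hsat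
          intro q hq
          by_cases hqp : q = p
          · subst hqp
            rw [Function.update_self, hMp]
          · rw [Function.update_of_ne hqp]
            have hqψ := freeVars_subset_vars ψ hq
            by_cases hqY : q ∈ Y
            · rw [hMY q hqY hqp]
            · rw [hMother q hqp (fun h => (hvarsmp q h).1 hqψ) hqY,
                hN q (fun h => (hvarsmn q h).1 hqψ), hW q hqY]
        · rw [hMp]
          simp only [Bool.false_eq_true, false_iff]
          intro hs
          apply hUφ
          refine (sat_congr φ _ U ?_).1 hs
          intro q hq
          by_cases hqX : q ∈ X
          · rw [if_pos (Finset.mem_toList.2 hqX), hMmp q hqX]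
          · have hqv := freeVars_subset_vars φ hq
            rw [if_neg (by simpa [Finset.mem_toList] using hqX),
              hMother q (hpfree q hq) (fun h => (hvarsmp q h).2.1 hqv) (fun h => hYφ q h hqv),
              hN q (fun h => (hvarsmn q h).2.1 hqv), ← hU q hqX]
        · intro x hx hp
          rw [hMp] at hp
          simp at hp
  · intro hall
    by_cases ha : Sat V (qall X φ)
    · obtain ⟨M, hMagree, hMs⟩ := hall V (fun q _ => rfl)
      rw [hbody M] at hMs
      obtain ⟨h1, h2, h3⟩ := hMs
      have hMother : ∀ q, q ≠ p → q ∉ X.image mp → q ∉ Y → M q = V q := by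
        intro q hp' hmp' hY'
        exact hMagree q (by rw [hmemB]; exact ⟨hY', hmp', hp'⟩)
      have hMp : M p = true := by
        by_contra hMp
        apply hMp
        apply h2.2
        have hU0 := ha (fun q => if q ∈ X then M (mp q) else V q) (fun q hq => by simp [hq])
        refine (sat_congr φ _ _ ?_).1 hU0
        intro q hq
        by_cases hqX : q ∈ X
        · simp [hqX, Finset.mem_toList]
        · have hqv := freeVars_subset_vars φ hq
          rw [if_neg hqX, if_neg (by simpa [Finset.mem_toList] using hqX),
            hMother q (hpfree q hq) (fun h => (hvarsmp q h).2.1 hqv) (fun h => hYφ q h hqv)]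
      refine ⟨fun q => if q ∈ Y then M q else V q, fun q hq => by simp [hq], ?_⟩
      have hbW : Sat (fun q => if q ∈ Y then M q else V q) (qall X φ) ↔ (true = true) := by
        rw [hχfree _ (fun q hq => by simp [hq])]
        simp [ha]
      rw [sat_subst p (qall X φ) true ψ _ hpscope hbW]
      refine (sat_congr ψ M _ ?_).1 h1
      intro q hq
      by_cases hqp : q = p
      · subst hqp
        rw [Function.update_self, hMp]
      · rw [Function.update_of_ne hqp]
        have hqψ := freeVars_subset_vars ψ hq
        by_cases hqY : q ∈ Y
        · rw [if_pos hqY]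
        · rw [if_neg hqY, hMother q hqp (fun h => (hvarsmp q h).1 hqψ) hqY]
    · have ha0 := ha
      rw [sat_qall] at ha
      push_neg at ha
      obtain ⟨U, hU, hUφ⟩ := ha
      set N : ℕ → Bool := fun q => if q ∈ X.image mn then U (pkn q) else V q with hNdef
      have hNmn : ∀ x ∈ X, N (mn x) = U x := by
        intro x hx
        simp only [hNdef]
        rw [if_pos (Finset.mem_image_of_mem mn hx), hpkn x hx]
      have hNother : ∀ q, q ∉ X.image mn → N q = V q := by
        intro q hq
        simp only [hNdef]
        rw [if_neg hq]
      obtain ⟨M, hMagree, hMs⟩ := hall N (fun q hq => hNother q hq)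
      rw [hbody M] at hMs
      obtain ⟨h1, h2, h3⟩ := hMs
      have hMother : ∀ q, q ≠ p → q ∉ X.image mp → q ∉ Y → M q = N q := by
        intro q hp' hmp' hY'
        exact hMagree q (by rw [hmemB]; exact ⟨hY', hmp', hp'⟩)
      have hMp : M p = false := by
        rcases Bool.eq_false_or_eq_true (M p) with h | h
        swap
        · exact h
        · exfalso
          have hiff : ∀ x ∈ X, M (mp x) = U x := by
            intro x hx
            have hh := h3 x hx h
            have hMn : M (mn x) = N (mn x) :=
              hMother (mn x) (hmn x hx).2.2.2.2 (hmnimg x hx) (hmn x hx).2.2.1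
            rw [hMn, hNmn x hx] at hh
            exact bool_eq_of_iff hh
          apply hUφ
          have hs := h2.1 h
          refine (sat_congr φ _ U ?_).1 hs
          intro q hq
          by_cases hqX : q ∈ X
          · rw [if_pos (Finset.mem_toList.2 hqX), hiff q hqX]
          · have hqv := freeVars_subset_vars φ hq
            rw [if_neg (by simpa [Finset.mem_toList] using hqX),
              hMother q (hpfree q hq) (fun h => (hvarsmp q h).2.1 hqv) (fun h => hYφ q h hqv),
              hNother q (fun h => (hvarsmn q h).2.1 hqv), ← hU q hqX]
      refine ⟨fun q => if q ∈ Y then M q else V q, fun q hq => by simp [hq], ?_⟩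
      have hbW : Sat (fun q => if q ∈ Y then M q else V q) (qall X φ) ↔ (false = true) := by
        rw [hχfree _ (fun q hq => by simp [hq])]
        simp only [Bool.false_eq_true, iff_false]
        exact ha0
      rw [sat_subst p (qall X φ) false ψ _ hpscope hbW]
      refine (sat_congr ψ M _ ?_).1 h1
      intro q hq
      by_cases hqp : q = p
      · subst hqp
        rw [Function.update_self, hMp]
      · rw [Function.update_of_ne hqp]
        have hqψ := freeVars_subset_vars ψ hq
        by_cases hqY : q ∈ Y
        · rw [if_pos hqY]
        · rw [if_neg hqY, hMother q hqp (fun h => (hvarsmp q h).1 hqψ) hqY,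
            hNother q (fun h => (hvarsmn q h).1 hqψ)]
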